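/- arXiv:math/0006110 — 4 statements merged into one kernel-verified Lean document; each statement's English description precedes it below -/
import Mathlib

section
/- Let k be a field, and let n, l, m be positive integers with l, m ≤ n and s := l + m − n ≥ 1; set r := n − l + 1. Let A be an m × n matrix (entries a_i^j) and B an n × l matrix (entries b_i^j) over k, and C = A·B (entries c_i^j = Σ_k a_i^k b_k^j). Then the following identity holds: (det of the m × m submatrix of A on its first m columns) · (det of the l × l submatrix of B on its last l rows) = (1/s!) · Σ over indices i_1,…,i_m and j_1,…,j_l of ε^{i_1…i_m} a_{i_1}^1 ⋯ a_{i_{r−1}}^{r−1} · ε_{j_1…j_l} b_{m+1}^{j_{s+1}} ⋯ b_n^{j_l} · c_{i_r}^{j_1} ⋯ c_{i_m}^{j_s}, where ε denotes the Levi-Civita (determinant) tensor. -/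
open Matrix Finset Equiv

namespace Stmt1Aux

variable {k : Type*} [Field k] {a s b : ℕ}

def colMap (f : Fin s → Fin (a+s+b)) (j : Fin (a+s)) : Fin (a+s+b) :=
  if h : (j:ℕ) < a then ⟨j, by omega⟩ else f ⟨(j:ℕ) - a, by have := j.isLt; omega⟩

def rowMap (f : Fin s → Fin (a+s+b)) (i : Fin (s+b)) : Fin (a+s+b) :=
  if h : (i:ℕ) < s then f ⟨i, h⟩ else ⟨a + (i:ℕ), by have := i.isLt; omega⟩

lemma colMap_castAdd (f : Fin s → Fin (a+s+b)) (t : Fin a) :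
    colMap f (Fin.castAdd s t) = ⟨(t:ℕ), by have := t.isLt; omega⟩ := by
  simp [colMap, t.isLt]

lemma colMap_natAdd (f : Fin s → Fin (a+s+b)) (u : Fin s) :
    colMap f (Fin.natAdd a u) = f u := by
  simp [colMap]

lemma rowMap_castAdd (f : Fin s → Fin (a+s+b)) (u : Fin s) :
    rowMap f (Fin.castAdd b u) = f u := by
  simp [rowMap, u.isLt]

lemma rowMap_natAdd (f : Fin s → Fin (a+s+b)) (w : Fin b) :
    rowMap f (Fin.natAdd s w) = ⟨a + s + (w:ℕ), by have := w.isLt; omega⟩ := by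
  simp only [rowMap, Fin.natAdd_mk, Fin.coe_natAdd]
  rw [dif_neg (by omega)]
  exact Fin.ext (by simp; omega)

def MA (A : Matrix (Fin (a+s)) (Fin (a+s+b)) k) (f : Fin s → Fin (a+s+b)) :
    Matrix (Fin (a+s)) (Fin (a+s)) k := of fun i j => A i (colMap f j)

def NB (B : Matrix (Fin (a+s+b)) (Fin (s+b)) k) (f : Fin s → Fin (a+s+b)) :
    Matrix (Fin (s+b)) (Fin (s+b)) k := of fun i j => B (rowMap f i) j

lemma detMA (A : Matrix (Fin (a+s)) (Fin (a+s+b)) k) (f : Fin s → Fin (a+s+b)) :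
    (MA A f).det = ∑ σ : Perm (Fin (a+s)), ((Perm.sign σ : ℤ) : k) *
      ((∏ t : Fin a, A (σ ⟨(t:ℕ), by have := t.isLt; omega⟩) ⟨(t:ℕ), by have := t.isLt; omega⟩) *
       ∏ u : Fin s, A (σ ⟨a + (u:ℕ), by have := u.isLt; omega⟩) (f u)) := by
  rw [det_apply']
  refine Finset.sum_congr rfl fun σ _ => ?_
  refine congrArg (((Perm.sign σ : ℤ) : k) * ·) ?_
  rw [Fin.prod_univ_add]
  refine congrArg₂ (· * ·) (Finset.prod_congr rfl fun t _ => ?_) (Finset.prod_congr rfl fun u _ => ?_)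
  · show A (σ (Fin.castAdd s t)) (colMap f (Fin.castAdd s t)) = _
    rw [colMap_castAdd]; rfl
  · show A (σ (Fin.natAdd a u)) (colMap f (Fin.natAdd a u)) = _
    rw [colMap_natAdd]; rfl

lemma detNB (B : Matrix (Fin (a+s+b)) (Fin (s+b)) k) (f : Fin s → Fin (a+s+b)) :
    (NB B f).det = ∑ τ : Perm (Fin (s+b)), ((Perm.sign τ : ℤ) : k) *
      ((∏ u : Fin s, B (f u) (τ ⟨(u:ℕ), by have := u.isLt; omega⟩)) *
       ∏ w : Fin b, B ⟨a + s + (w:ℕ), by have := w.isLt; omega⟩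
         (τ ⟨s + (w:ℕ), by have := w.isLt; omega⟩)) := by
  rw [← det_transpose, det_apply']
  refine Finset.sum_congr rfl fun τ _ => ?_
  refine congrArg (((Perm.sign τ : ℤ) : k) * ·) ?_
  rw [show (∏ i, (NB B f)ᵀ (τ i) i) = ∏ i, B (rowMap f i) (τ i) from rfl, Fin.prod_univ_add]
  refine congrArg₂ (· * ·) (Finset.prod_congr rfl fun u _ => ?_) (Finset.prod_congr rfl fun w _ => ?_)
  · rw [rowMap_castAdd]; rfl
  · rw [rowMap_natAdd]; rfl


lemma MA_det_zero_lt (A : Matrix (Fin (a+s)) (Fin (a+s+b)) k) (f : Fin s → Fin (a+s+b))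
    (u : Fin s) (hu : (f u : ℕ) < a) : (MA A f).det = 0 := by
  refine Matrix.det_zero_of_column_eq (i := Fin.castAdd s ⟨(f u : ℕ), hu⟩)
    (j := Fin.natAdd a u) (by simp [Fin.ext_iff]; omega) fun r => ?_
  show A r (colMap f (Fin.castAdd s ⟨(f u : ℕ), hu⟩)) = A r (colMap f (Fin.natAdd a u))
  rw [colMap_castAdd, colMap_natAdd]

lemma MA_det_zero_ne (A : Matrix (Fin (a+s)) (Fin (a+s+b)) k) (f : Fin s → Fin (a+s+b))
    (u v : Fin s) (huv : u ≠ v) (h : f u = f v) : (MA A f).det = 0 := by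
  refine Matrix.det_zero_of_column_eq (i := Fin.natAdd a u) (j := Fin.natAdd a v)
    (by simpa [Fin.ext_iff] using fun hh => huv (Fin.ext hh)) fun r => ?_
  show A r (colMap f (Fin.natAdd a u)) = A r (colMap f (Fin.natAdd a v))
  rw [colMap_natAdd, colMap_natAdd, h]

lemma NB_det_zero_ge (B : Matrix (Fin (a+s+b)) (Fin (s+b)) k) (f : Fin s → Fin (a+s+b))
    (u : Fin s) (hu : a + s ≤ (f u : ℕ)) : (NB B f).det = 0 := by
  refine Matrix.det_zero_of_row_eq (i := Fin.castAdd b u)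
    (j := Fin.natAdd s ⟨(f u : ℕ) - (a + s), by have := (f u).isLt; omega⟩)
    (by have := hu; simp [Fin.ext_iff]; omega) ?_
  funext c
  show B (rowMap f (Fin.castAdd b u)) c = B (rowMap f _) c
  rw [rowMap_castAdd, rowMap_natAdd]
  congr 1
  exact Fin.ext (by simp; omega)


/-- The embedding of permutations into functions `Fin s → Fin (a+s+b)`. -/
def embPerm (a b : ℕ) (π : Perm (Fin s)) (u : Fin s) : Fin (a+s+b) :=
  ⟨a + (π u : ℕ), by have := (π u).isLt; omega⟩

lemma embPerm_injective : Function.Injective (embPerm (s := s) a b) := by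
  intro π π' h
  ext u
  have := congrFun h u
  simpa [embPerm, Fin.ext_iff] using this

def rhoA (π : Perm (Fin s)) : Perm (Fin (a+s)) :=
  Equiv.permCongr finSumFinEquiv (Equiv.sumCongr (Equiv.refl (Fin a)) π)

def rhoB (π : Perm (Fin s)) : Perm (Fin (s+b)) :=
  Equiv.permCongr finSumFinEquiv (Equiv.sumCongr π (Equiv.refl (Fin b)))

lemma sign_rhoA (π : Perm (Fin s)) : Perm.sign (rhoA (a := a) π) = Perm.sign π := by
  rw [rhoA, Perm.sign_permCongr, Perm.sign_sumCongr, Perm.sign_refl, one_mul]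

lemma sign_rhoB (π : Perm (Fin s)) : Perm.sign (rhoB (b := b) π) = Perm.sign π := by
  rw [rhoB, Perm.sign_permCongr, Perm.sign_sumCongr, Perm.sign_refl, mul_one]

lemma rhoA_castAdd (π : Perm (Fin s)) (t : Fin a) :
    rhoA (a := a) π (Fin.castAdd s t) = Fin.castAdd s t := by
  simp [rhoA, Equiv.permCongr_apply]

lemma rhoA_natAdd (π : Perm (Fin s)) (u : Fin s) :
    rhoA (a := a) π (Fin.natAdd a u) = Fin.natAdd a (π u) := by
  simp [rhoA, Equiv.permCongr_apply]

lemma rhoB_castAdd (π : Perm (Fin s)) (u : Fin s) :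
    rhoB (b := b) π (Fin.castAdd b u) = Fin.castAdd b (π u) := by
  simp [rhoB, Equiv.permCongr_apply]

lemma rhoB_natAdd (π : Perm (Fin s)) (w : Fin b) :
    rhoB (b := b) π (Fin.natAdd s w) = Fin.natAdd s w := by
  simp [rhoB, Equiv.permCongr_apply]

lemma MA_embPerm (A : Matrix (Fin (a+s)) (Fin (a+s+b)) k) (π : Perm (Fin s)) :
    MA A (embPerm a b π) =
      (Matrix.of fun i j : Fin (a+s) => A i ⟨(j : ℕ), by have := j.isLt; omega⟩).submatrix
        id (rhoA π) := by
  ext i j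
  refine Fin.addCases (fun t => ?_) (fun u => ?_) j
  · show A i (colMap _ (Fin.castAdd s t)) = A i ⟨(rhoA π (Fin.castAdd s t) : ℕ), _⟩
    rw [colMap_castAdd, rhoA_castAdd]
    rfl
  · show A i (colMap _ (Fin.natAdd a u)) = A i ⟨(rhoA π (Fin.natAdd a u) : ℕ), _⟩
    rw [colMap_natAdd, rhoA_natAdd]
    rfl

lemma NB_embPerm (B : Matrix (Fin (a+s+b)) (Fin (s+b)) k) (π : Perm (Fin s)) :
    NB B (embPerm a b π) =
      (Matrix.of fun i j : Fin (s+b) => B ⟨a + (i : ℕ), by have := i.isLt; omega⟩ j).submatrix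
        (rhoB π) id := by
  ext i c
  refine Fin.addCases (fun u => ?_) (fun w => ?_) i
  · show B (rowMap _ (Fin.castAdd b u)) c = B ⟨a + (rhoB π (Fin.castAdd b u) : ℕ), _⟩ c
    rw [rowMap_castAdd, rhoB_castAdd]
    rfl
  · show B (rowMap _ (Fin.natAdd s w)) c = B ⟨a + (rhoB π (Fin.natAdd s w) : ℕ), _⟩ c
    rw [rowMap_natAdd, rhoB_natAdd]
    congr 1
    exact Fin.ext (by simp; omega)


theorem key [CharZero k] (A : Matrix (Fin (a+s)) (Fin (a+s+b)) k)
    (B : Matrix (Fin (a+s+b)) (Fin (s+b)) k) :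
    Matrix.det (Matrix.of fun i j : Fin (a+s) => A i ⟨(j : ℕ), by have := j.isLt; omega⟩) *
      Matrix.det (Matrix.of fun i j : Fin (s+b) =>
        B ⟨a + (i : ℕ), by have := i.isLt; omega⟩ j) =
    ((s.factorial : k))⁻¹ *
      ∑ σ : Perm (Fin (a+s)), ∑ τ : Perm (Fin (s+b)),
        ((Perm.sign σ : ℤ) : k) * ((Perm.sign τ : ℤ) : k) *
        (∏ t : Fin a,
          A (σ ⟨(t : ℕ), by have := t.isLt; omega⟩) ⟨(t : ℕ), by have := t.isLt; omega⟩) *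
        (∏ u : Fin s,
          (A * B) (σ ⟨a + (u : ℕ), by have := u.isLt; omega⟩)
            (τ ⟨(u : ℕ), by have := u.isLt; omega⟩)) *
        (∏ w : Fin b,
          B ⟨a + s + (w : ℕ), by have := w.isLt; omega⟩
            (τ ⟨s + (w : ℕ), by have := w.isLt; omega⟩)) := by
  have hsum : (∑ f : Fin s → Fin (a+s+b), (MA A f).det * (NB B f).det)
      = ∑ σ : Perm (Fin (a+s)), ∑ τ : Perm (Fin (s+b)),
        ((Perm.sign σ : ℤ) : k) * ((Perm.sign τ : ℤ) : k) *
        (∏ t : Fin a,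
          A (σ ⟨(t : ℕ), by have := t.isLt; omega⟩) ⟨(t : ℕ), by have := t.isLt; omega⟩) *
        (∏ u : Fin s,
          (A * B) (σ ⟨a + (u : ℕ), by have := u.isLt; omega⟩)
            (τ ⟨(u : ℕ), by have := u.isLt; omega⟩)) *
        (∏ w : Fin b,
          B ⟨a + s + (w : ℕ), by have := w.isLt; omega⟩
            (τ ⟨s + (w : ℕ), by have := w.isLt; omega⟩)) := by
    calc
      (∑ f : Fin s → Fin (a+s+b), (MA A f).det * (NB B f).det)
          = ∑ f : Fin s → Fin (a+s+b), ∑ σ : Perm (Fin (a+s)), ∑ τ : Perm (Fin (s+b)),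
            (((Perm.sign σ : ℤ) : k) *
              ((∏ t : Fin a, A (σ ⟨(t : ℕ), by have := t.isLt; omega⟩)
                  ⟨(t : ℕ), by have := t.isLt; omega⟩) *
               ∏ u : Fin s, A (σ ⟨a + (u : ℕ), by have := u.isLt; omega⟩) (f u))) *
            (((Perm.sign τ : ℤ) : k) *
              ((∏ u : Fin s, B (f u) (τ ⟨(u : ℕ), by have := u.isLt; omega⟩)) *
               ∏ w : Fin b, B ⟨a + s + (w : ℕ), by have := w.isLt; omega⟩
                 (τ ⟨s + (w : ℕ), by have := w.isLt; omega⟩))) := by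
          refine Finset.sum_congr rfl fun f _ => ?_
          rw [detMA, detNB, Finset.sum_mul_sum]
      _ = ∑ σ : Perm (Fin (a+s)), ∑ τ : Perm (Fin (s+b)), ∑ f : Fin s → Fin (a+s+b),
            (((Perm.sign σ : ℤ) : k) *
              ((∏ t : Fin a, A (σ ⟨(t : ℕ), by have := t.isLt; omega⟩)
                  ⟨(t : ℕ), by have := t.isLt; omega⟩) *
               ∏ u : Fin s, A (σ ⟨a + (u : ℕ), by have := u.isLt; omega⟩) (f u))) *
            (((Perm.sign τ : ℤ) : k) *
              ((∏ u : Fin s, B (f u) (τ ⟨(u : ℕ), by have := u.isLt; omega⟩)) *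
               ∏ w : Fin b, B ⟨a + s + (w : ℕ), by have := w.isLt; omega⟩
                 (τ ⟨s + (w : ℕ), by have := w.isLt; omega⟩))) := by
          rw [Finset.sum_comm]
          exact Finset.sum_congr rfl fun σ _ => Finset.sum_comm
      _ = _ := by
          refine Finset.sum_congr rfl fun σ _ => Finset.sum_congr rfl fun τ _ => ?_
          rw [show (∑ f : Fin s → Fin (a+s+b),
              (((Perm.sign σ : ℤ) : k) *
                ((∏ t : Fin a, A (σ ⟨(t : ℕ), by have := t.isLt; omega⟩)
                    ⟨(t : ℕ), by have := t.isLt; omega⟩) *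
                 ∏ u : Fin s, A (σ ⟨a + (u : ℕ), by have := u.isLt; omega⟩) (f u))) *
              (((Perm.sign τ : ℤ) : k) *
                ((∏ u : Fin s, B (f u) (τ ⟨(u : ℕ), by have := u.isLt; omega⟩)) *
                 ∏ w : Fin b, B ⟨a + s + (w : ℕ), by have := w.isLt; omega⟩
                   (τ ⟨s + (w : ℕ), by have := w.isLt; omega⟩))))
            = ∑ f : Fin s → Fin (a+s+b),
              (((Perm.sign σ : ℤ) : k) * ((Perm.sign τ : ℤ) : k) *
                (∏ t : Fin a, A (σ ⟨(t : ℕ), by have := t.isLt; omega⟩)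
                    ⟨(t : ℕ), by have := t.isLt; omega⟩) *
                (∏ w : Fin b, B ⟨a + s + (w : ℕ), by have := w.isLt; omega⟩
                   (τ ⟨s + (w : ℕ), by have := w.isLt; omega⟩))) *
              ∏ u : Fin s,
                (A (σ ⟨a + (u : ℕ), by have := u.isLt; omega⟩) (f u) *
                 B (f u) (τ ⟨(u : ℕ), by have := u.isLt; omega⟩))
            from Finset.sum_congr rfl fun f _ => by
              rw [Finset.prod_mul_distrib]; ring]
          rw [← Finset.mul_sum]
          have hPC : (∏ u : Fin s,
              (A * B) (σ ⟨a + (u : ℕ), by have := u.isLt; omega⟩)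
                (τ ⟨(u : ℕ), by have := u.isLt; omega⟩))
              = ∑ f : Fin s → Fin (a+s+b), ∏ u : Fin s,
                (A (σ ⟨a + (u : ℕ), by have := u.isLt; omega⟩) (f u) *
                 B (f u) (τ ⟨(u : ℕ), by have := u.isLt; omega⟩)) := by
            simp_rw [Matrix.mul_apply]
            rw [Finset.prod_univ_sum]
            rw [Fintype.piFinset_univ]
          rw [← hPC]
          ring
  rw [← hsum]
  have hvanish : ∀ f ∈ (Finset.univ : Finset (Fin s → Fin (a+s+b))),
      f ∉ Finset.image (embPerm a b) Finset.univ → (MA A f).det * (NB B f).det = 0 := by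
    intro f _ hf
    by_cases h1 : ∃ u, (f u : ℕ) < a
    · obtain ⟨u, hu⟩ := h1
      rw [MA_det_zero_lt A f u hu, zero_mul]
    by_cases h2 : ∃ u, a + s ≤ (f u : ℕ)
    · obtain ⟨u, hu⟩ := h2
      rw [NB_det_zero_ge B f u hu, mul_zero]
    by_cases h3 : ∃ u v, u ≠ v ∧ f u = f v
    · obtain ⟨u, v, huv, h⟩ := h3
      rw [MA_det_zero_ne A f u v huv h, zero_mul]
    exfalso
    apply hf
    push_neg at h1 h2 h3
    have finj : Function.Injective f := fun u v h =>
      by_contra fun hne => h3 u v hne h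
    obtain ⟨π, hπ⟩ : ∃ π : Perm (Fin s), ∀ u, (π u : ℕ) = (f u : ℕ) - a := by
      have ginj : Function.Injective
          (fun u : Fin s => (⟨(f u : ℕ) - a, by have := h2 u; have := u.isLt; omega⟩ : Fin s)) := by
        intro u v h
        have hval : (f u : ℕ) - a = (f v : ℕ) - a := congrArg Fin.val h
        exact finj (Fin.ext (by have := h1 u; have := h1 v; omega))
      exact ⟨Equiv.ofBijective _ (Finite.injective_iff_bijective.mp ginj), fun u => rfl⟩
    refine Finset.mem_image.mpr ⟨π, Finset.mem_univ _, ?_⟩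
    funext u
    exact Fin.ext (by have := hπ u; have := h1 u; simp only [embPerm]; omega)
  rw [← Finset.sum_subset (Finset.subset_univ (Finset.image (embPerm a b) Finset.univ)) hvanish]
  rw [Finset.sum_image (fun π _ π' _ h => embPerm_injective h)]
  have hgood : ∀ π : Perm (Fin s),
      (MA A (embPerm a b π)).det * (NB B (embPerm a b π)).det =
        Matrix.det (Matrix.of fun i j : Fin (a+s) => A i ⟨(j : ℕ), by have := j.isLt; omega⟩) *
        Matrix.det (Matrix.of fun i j : Fin (s+b) =>
          B ⟨a + (i : ℕ), by have := i.isLt; omega⟩ j) := by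
    intro π
    rw [MA_embPerm, NB_embPerm, Matrix.det_permute', Matrix.det_permute, sign_rhoA, sign_rhoB,
      mul_mul_mul_comm]
    have h1 : ((Perm.sign π : ℤ) : k) * ((Perm.sign π : ℤ) : k) = 1 := by
      rw [← Int.cast_mul, ← Units.val_mul, Int.units_mul_self, Units.val_one, Int.cast_one]
    rw [h1, one_mul]
  rw [Finset.sum_congr rfl fun π _ => hgood π, Finset.sum_const, Finset.card_univ,
    Fintype.card_perm, Fintype.card_fin, nsmul_eq_mul]
  rw [inv_mul_cancel_left₀ (Nat.cast_ne_zero.mpr (Nat.factorial_ne_zero s))]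

end Stmt1Aux

/-- the identity (left order-m minor of A)·(lower order-l minor of B)
= (1/s!)·Σ ε^{i₁…i_m} a_{i₁}¹⋯a_{i_{r−1}}^{r−1} ε_{j₁…j_l} b_{m+1}^{j_{s+1}}⋯b_n^{j_l}
  c_{i_r}^{j₁}⋯c_{i_m}^{j_s}, with s = l+m−n, r = n−l+1, C = A·B. -/
theorem stmt1 (k : Type*) [Field k] [CharZero k] (n l m : ℕ)
    (hl : 0 < l) (hm : 0 < m) (hln : l ≤ n) (hmn : m ≤ n) (hs : n < l + m)
    (A : Matrix (Fin m) (Fin n) k) (B : Matrix (Fin n) (Fin l) k) :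
    Matrix.det (Matrix.of fun i j : Fin m => A i ⟨(j : ℕ), lt_of_lt_of_le j.isLt hmn⟩) *
      Matrix.det (Matrix.of fun i j : Fin l =>
        B ⟨n - l + (i : ℕ), by have := i.isLt; omega⟩ j) =
    (((l + m - n).factorial : k))⁻¹ *
      ∑ σ : Equiv.Perm (Fin m), ∑ τ : Equiv.Perm (Fin l),
        ((Equiv.Perm.sign σ : ℤ) : k) * ((Equiv.Perm.sign τ : ℤ) : k) *
        (∏ t : Fin (n - l),
          A (σ ⟨(t : ℕ), by have := t.isLt; omega⟩) ⟨(t : ℕ), by have := t.isLt; omega⟩) *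
        (∏ u : Fin (l + m - n),
          (A * B) (σ ⟨n - l + (u : ℕ), by have := u.isLt; omega⟩)
            (τ ⟨(u : ℕ), by have := u.isLt; omega⟩)) *
        (∏ w : Fin (n - m),
          B ⟨m + (w : ℕ), by have := w.isLt; omega⟩
            (τ ⟨l + m - n + (w : ℕ), by have := w.isLt; omega⟩)) := by
  obtain ⟨a, s, b, rfl, rfl, rfl⟩ : ∃ a s b, n = a + s + b ∧ l = s + b ∧ m = a + s :=
    ⟨n - l, l + m - n, n - m, by omega, by omega, by omega⟩
  simp only [show a + s + b - (s + b) = a from by omega,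
    show s + b + (a + s) - (a + s + b) = s from by omega,
    show a + s + b - (a + s) = b from by omega]
  refine (Stmt1Aux.key A B).trans ?_
  refine congrArg (((s.factorial : k))⁻¹ * ·) ?_
  refine Finset.sum_congr rfl fun σ _ => Finset.sum_congr rfl fun τ _ => ?_
  refine congrArg₂ (· * ·) (congrArg₂ (· * ·) (congrArg₂ (· * ·) rfl ?_) ?_) ?_
  · exact Fin.prod_congr' (fun t : Fin (a + s + b - (s + b)) =>
      A (σ ⟨(t : ℕ), by have := t.isLt; omega⟩) ⟨(t : ℕ), by have := t.isLt; omega⟩) (by omega)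
  · exact Fin.prod_congr' (fun u : Fin (s + b + (a + s) - (a + s + b)) =>
      (A * B) (σ ⟨a + (u : ℕ), by have := u.isLt; omega⟩)
        (τ ⟨(u : ℕ), by have := u.isLt; omega⟩)) (by omega)
  · exact Fin.prod_congr' (fun w : Fin (a + s + b - (a + s)) =>
      B ⟨a + s + (w : ℕ), by have := w.isLt; omega⟩
        (τ ⟨s + (w : ℕ), by have := w.isLt; omega⟩)) (by omega)
end

section
/- Let n ≥ 1 and let ε₁,…,ε_n be the standard basis of ℚ^n. Let C = {ξ ∈ ℚ^n : ξ₁ ≥ ξ₂ ≥ ⋯ ≥ ξ_n} and Φ = conv(±ε₁,…,±ε_n) = {ξ : Σ|ξ_i| ≤ 1} (rational convex hull). Let D be the rational convex hull of the points 0, ε₁, (ε₁+ε₂)/2, …, (ε₁+⋯+ε_n)/n, −ε_n, (−ε_n−ε_{n−1})/2, …, (−ε_n−⋯−ε₁)/n. Then Φ ∩ C ⊆ D. -/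
/-!
Split `ξ = ξ⁺ - ξ⁻`. Both `ξ⁺` and the reversal of `ξ⁻` are antitone and nonnegative, and an
antitone nonnegative `a` is the staircase combination `∑ᵢ (i+1)(aᵢ - aᵢ₊₁) • (ε₀ + ⋯ + εᵢ)/(i+1)`
(with `aₙ = 0`), whose nonnegative coefficients sum to `∑ᵢ aᵢ` by Abel summation. The two
combinations have total mass `∑ᵢ |ξᵢ| ≤ 1`, and the remaining mass goes to the vertex `0`.
-/

open Finset

section ConvexCombination

variable {𝕜 E ι κ : Type*} [Field 𝕜] [LinearOrder 𝕜] [IsStrictOrderedRing 𝕜]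
  [AddCommGroup E] [Module 𝕜 E] [Fintype ι] [Fintype κ]

lemma sum_smul_mem_convexHull_insert_zero (u : ι → E) {c : ι → 𝕜} (hc : ∀ i, 0 ≤ c i)
    (hsum : ∑ i, c i ≤ 1) : ∑ i, c i • u i ∈ convexHull 𝕜 (insert 0 (Set.range u)) := by
  have hmem := (convex_convexHull 𝕜 (insert 0 (Set.range u))).sum_mem (t := univ)
    (w := fun o : Option ι => o.elim (1 - ∑ i, c i) c) (z := fun o => o.elim 0 u)
    (by rintro (_ | i) -; exacts [sub_nonneg.2 hsum, hc i])
    (by simp [Fintype.sum_option])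
    (by rintro (_ | i) - <;> apply subset_convexHull <;> simp)
  simpa [Fintype.sum_option] using hmem

lemma add_sum_smul_mem_convexHull_insert_zero_union (u : ι → E) (v : κ → E) {c : ι → 𝕜}
    {d : κ → 𝕜} (hc : ∀ i, 0 ≤ c i) (hd : ∀ k, 0 ≤ d k) (hsum : ∑ i, c i + ∑ k, d k ≤ 1) :
    ∑ i, c i • u i + ∑ k, d k • v k ∈ convexHull 𝕜 (insert 0 (Set.range u ∪ Set.range v)) := by
  rw [← Set.Sum.elim_range]
  simpa [Fintype.sum_sum_type] using
    sum_smul_mem_convexHull_insert_zero (Sum.elim u v) (c := Sum.elim c d)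
      (by rintro (i | k); exacts [hc i, hd k]) (by simpa [Fintype.sum_sum_type] using hsum)

end ConvexCombination

lemma Finset.sum_range_natCast_add_one_mul_sub {R : Type*} [CommRing R] (f : ℕ → R) (m : ℕ) :
    ∑ i ∈ range m, ((i : R) + 1) * (f i - f (i + 1)) = ∑ i ∈ range m, f i - m * f m := by
  induction m with
  | zero => simp
  | succ m ih => rw [sum_range_succ, ih, sum_range_succ]; push_cast; ring

lemma Finset.sum_range_ite_le_sub {G : Type*} [AddCommGroup G] (f : ℕ → G) {j m : ℕ}
    (h : j ≤ m) : ∑ i ∈ range m, (if j ≤ i then f i - f (i + 1) else 0) = f j - f m := by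
  have hfilter : (range m).filter (j ≤ ·) = Ico j m := by
    ext; simp only [mem_filter, mem_range, mem_Ico]; omega
  rw [← sum_filter, hfilter, ← neg_sub, ← sum_Ico_sub f h, ← sum_neg_distrib]
  simp only [sum_sub_distrib, neg_sub]

section Staircase

variable {𝕜 : Type*} [Field 𝕜] {n : ℕ}

def prefixAvg (n : ℕ) (i : Fin n) : Fin n → 𝕜 :=
  fun j => if j ≤ i then 1 / ((i : ℕ) + 1) else 0

def negSuffixAvg (n : ℕ) (i : Fin n) : Fin n → 𝕜 :=
  fun j => if n ≤ (i : ℕ) + (j : ℕ) + 1 then -1 / ((i : ℕ) + 1) else 0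

lemma negSuffixAvg_apply (i j : Fin n) :
    negSuffixAvg n i j = -(prefixAvg n i j.rev : 𝕜) := by
  have : j.rev ≤ i ↔ n ≤ (i : ℕ) + (j : ℕ) + 1 := by rw [Fin.le_def, Fin.val_rev]; omega
  simp only [negSuffixAvg, prefixAvg, this, neg_div]
  split_ifs <;> simp

def zeroExtend (a : Fin n → 𝕜) (k : ℕ) : 𝕜 := if h : k < n then a ⟨k, h⟩ else 0

@[simp] lemma zeroExtend_val (a : Fin n → 𝕜) (i : Fin n) : zeroExtend a i = a i := by
  simp [zeroExtend]

@[simp] lemma zeroExtend_self (a : Fin n → 𝕜) : zeroExtend a n = 0 := by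
  simp [zeroExtend]

lemma zeroExtend_succ_le [LinearOrder 𝕜] {a : Fin n → 𝕜} (ha : Antitone a)
    (h0 : ∀ i, 0 ≤ a i) (k : ℕ) : zeroExtend a (k + 1) ≤ zeroExtend a k := by
  unfold zeroExtend
  split_ifs with h₁ h₂
  · exact ha (Fin.mk_le_mk.2 k.le_succ)
  · omega
  · exact h0 _
  · rfl

def stairWeight (a : Fin n → 𝕜) (i : Fin n) : 𝕜 :=
  ((i : ℕ) + 1) * (zeroExtend a i - zeroExtend a (i + 1))

lemma stairWeight_nonneg [LinearOrder 𝕜] [IsStrictOrderedRing 𝕜] {a : Fin n → 𝕜}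
    (ha : Antitone a) (h0 : ∀ i, 0 ≤ a i) (i : Fin n) : 0 ≤ stairWeight a i :=
  mul_nonneg (by positivity) (sub_nonneg.2 (zeroExtend_succ_le ha h0 i))

lemma sum_stairWeight (a : Fin n → 𝕜) : ∑ i, stairWeight a i = ∑ i, a i := by
  simp_rw [stairWeight, ← zeroExtend_val a]
  rw [Fin.sum_univ_eq_sum_range
      (fun k => ((k : 𝕜) + 1) * (zeroExtend a k - zeroExtend a (k + 1))),
    sum_range_natCast_add_one_mul_sub, zeroExtend_self, mul_zero, sub_zero,
    Fin.sum_univ_eq_sum_range]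

lemma sum_stairWeight_mul_prefixAvg [CharZero 𝕜] (a : Fin n → 𝕜) (j : Fin n) :
    ∑ i, stairWeight a i * prefixAvg n i j = a j := by
  have hterm : ∀ i : Fin n, stairWeight a i * prefixAvg n i j =
      if (j : ℕ) ≤ i then zeroExtend a i - zeroExtend a (i + 1) else 0 := by
    intro i
    simp only [stairWeight, prefixAvg, Fin.le_def]
    split_ifs
    · field_simp
    · simp
  simp_rw [hterm]
  rw [Fin.sum_univ_eq_sum_range (fun k => if (j : ℕ) ≤ k then
      zeroExtend a k - zeroExtend a (k + 1) else 0),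
    sum_range_ite_le_sub _ j.is_le', zeroExtend_self, sub_zero, zeroExtend_val]

end Staircase

theorem stmt6_general (n : ℕ) (ξ : Fin n → ℚ)
    (hmono : ∀ i j : Fin n, i ≤ j → ξ j ≤ ξ i)
    (hΦ : ∑ i : Fin n, |ξ i| ≤ 1) :
    ξ ∈ convexHull ℚ (insert (0 : Fin n → ℚ)
      (Set.range (fun i : Fin n => fun j : Fin n =>
          if j ≤ i then (1 : ℚ) / ((i : ℕ) + 1) else 0) ∪
       Set.range (fun i : Fin n => fun j : Fin n =>
          if n ≤ (i : ℕ) + (j : ℕ) + 1 then -(1 : ℚ) / ((i : ℕ) + 1) else 0))) := by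
  set a : Fin n → ℚ := fun j => (ξ j)⁺
  set b : Fin n → ℚ := fun j => (ξ j.rev)⁻
  have ha : Antitone a := fun i j h => posPart_mono (hmono i j h)
  have hb : Antitone b := fun i j h => negPart_anti (hmono _ _ (Fin.rev_le_rev.2 h))
  have hξ : ξ = ∑ i, stairWeight a i • prefixAvg n i +
      ∑ i, stairWeight b i • negSuffixAvg n i := by
    funext j
    simp only [Pi.add_apply, Finset.sum_apply, Pi.smul_apply, smul_eq_mul, negSuffixAvg_apply,
      mul_neg, sum_neg_distrib, sum_stairWeight_mul_prefixAvg, a, b, Fin.rev_rev,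
      ← sub_eq_add_neg, posPart_sub_negPart]
  have hmass : ∑ i, stairWeight a i + ∑ i, stairWeight b i ≤ 1 := by
    have hb_sum : ∑ j, b j = ∑ j, (ξ j)⁻ := Equiv.sum_comp Fin.revPerm (fun j => (ξ j)⁻)
    simpa only [sum_stairWeight, hb_sum, a, ← sum_add_distrib, posPart_add_negPart] using hΦ
  rw [hξ]
  exact add_sum_smul_mem_convexHull_insert_zero_union _ _
    (stairWeight_nonneg ha fun _ => posPart_nonneg _)
    (stairWeight_nonneg hb fun _ => negPart_nonneg _) hmass

/-- GL case of the momentum-polytope lemma. If `ξ ∈ ℚⁿ` is weakly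
decreasing with `Σ|ξᵢ| ≤ 1`, then `ξ` lies in the rational convex hull of `0`,
the normalized partial sums `(ε₁+⋯+εᵢ)/i`, and `(−εₙ−⋯−ε_{n−i+1})/i`. -/
theorem stmt6 (n : ℕ) (hn : 1 ≤ n) (ξ : Fin n → ℚ)
    (hmono : ∀ i j : Fin n, i ≤ j → ξ j ≤ ξ i)
    (hΦ : ∑ i : Fin n, |ξ i| ≤ 1) :
    ξ ∈ convexHull ℚ (insert (0 : Fin n → ℚ)
      (Set.range (fun i : Fin n => fun j : Fin n =>
          if j ≤ i then (1 : ℚ) / ((i : ℕ) + 1) else 0) ∪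
       Set.range (fun i : Fin n => fun j : Fin n =>
          if n ≤ (i : ℕ) + (j : ℕ) + 1 then -(1 : ℚ) / ((i : ℕ) + 1) else 0))) :=
  stmt6_general n ξ hmono hΦ
end

section
/- Let n ≥ 1. In the free abelian group with basis φ₁,…,φ_n, consider the weighted elements α_i = φ_i with degree i (1 ≤ i ≤ n), β_j = φ_j − φ_n with degree n − j (1 ≤ j ≤ n−1), and β_n = −φ_n with degree n. Define for each χ in the submonoid generated by these elements n(χ) to be the minimal total degree of a representation of χ as a nonnegative integer combination of the α_i and β_j. Then n(cχ) = c·n(χ) for every positive integer c. -/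
/-!
Write `n = L + 1`. A presentation `(a, b)` of `χ` is determined by `b`: `a k = χ k - b k` for
`k < L` and `a L = χ L + ∑ b`, so the constraints are `0 ≤ b k ≤ χ k` (`k < L`) and
`∑ b ≥ m := max 0 (-χ L)`. Substituting, the degree becomes `baseDegree χ + 2 ∑_{k ≤ L} R k`
with `R k = b L + ∑_{j < k} b j`. Since the `b j` with `k ≤ j < L` are bounded by
`S k = ∑_{k ≤ j < L} χ j`, every presentation has `R k ≥ max 0 (m - S k)`, and the greedy choice
whose tail sums are `min m (S k)` attains all these bounds at once. Hence
`n(χ) = baseDegree χ + 2 ∑_k max 0 (m - S k)`, which is positively homogeneous in `χ`.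
-/

/-- The weights `α_i = φ_i` (degree `i`), `β_j = φ_j − φ_n` (degree `n − j`,
`j ≤ n−1`) and `β_n = −φ_n` (degree `n`), in the free abelian group `ℤⁿ` with
basis `φ₁,…,φ_n` (0-based indexing: index `j` with `j < n−1` is `β_{j+1}`, the
last index is `β_n`). -/
def alphaWt (n : ℕ) (i : Fin n) : Fin n → ℤ := Pi.single i 1

def betaWt (n : ℕ) (hn : 1 ≤ n) (j : Fin n) : Fin n → ℤ :=
  if (j : ℕ) < n - 1 then Pi.single j 1 - Pi.single (⟨n - 1, by omega⟩ : Fin n) 1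
  else -Pi.single (⟨n - 1, by omega⟩ : Fin n) 1

/-- An element represented by nonnegative integer coefficients `a` (of the `α`'s)
and `b` (of the `β`'s). -/
def repWt (n : ℕ) (hn : 1 ≤ n) (a b : Fin n → ℕ) : Fin n → ℤ :=
  ∑ i : Fin n, (a i : ℤ) • alphaWt n i + ∑ j : Fin n, (b j : ℤ) • betaWt n hn j

/-- The total degree of a representation. -/
def degWt (n : ℕ) (a b : Fin n → ℕ) : ℕ :=
  ∑ i : Fin n, a i * ((i : ℕ) + 1) +
    ∑ j : Fin n, b j * (if (j : ℕ) < n - 1 then n - ((j : ℕ) + 1) else n)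

open Finset

lemma sum_range_sum_range_eq_sum_sub_mul (L : ℕ) (β : ℕ → ℤ) :
    ∑ k ∈ range (L + 1), ∑ j ∈ range k, β j = ∑ j ∈ range (L + 1), ((L : ℤ) - j) * β j := by
  have := sum_Ico_Ico_comm' 0 (L + 1) (fun j _ => β j)
  simp only [← range_eq_Ico, sum_const, Nat.card_Ico, Nat.add_sub_add_right, nsmul_eq_mul] at this
  rw [← this]
  refine sum_congr rfl fun j hj => ?_
  rw [Nat.cast_sub (Nat.lt_succ_iff.1 (mem_range.1 hj))]

section Sequences

variable {L : ℕ} {f : ℕ → ℤ}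

def baseDegree (L : ℕ) (f : ℕ → ℤ) : ℤ :=
  ∑ k ∈ range L, f k * (k + 1) + f L * (L + 1)

def minDegree (L : ℕ) (f : ℕ → ℤ) : ℤ :=
  baseDegree L f + 2 * ∑ k ∈ range (L + 1), max 0 (max 0 (-f L) - ∑ j ∈ Ico k L, f j)

lemma minDegree_mul {c : ℤ} (hc : 0 ≤ c) : minDegree L (fun k => c * f k) = c * minDegree L f := by
  have hmax : ∀ x, max 0 (c * x) = c * max 0 x := fun x => by
    rw [mul_max_of_nonneg _ _ hc, mul_zero]
  simp only [minDegree, baseDegree, ← mul_sum, ← mul_neg, hmax, ← mul_sub, mul_assoc]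
  ring

lemma degree_eq_baseDegree_add {A B : ℕ → ℤ} (hco : ∀ k < L, f k = A k + B k)
    (hlast : f L = A L - ∑ k ∈ range (L + 1), B k) :
    ∑ k ∈ range L, A k * (k + 1) + A L * (L + 1) + ∑ k ∈ range L, B k * (L - k) + B L * (L + 1) =
      baseDegree L f + 2 * ∑ k ∈ range (L + 1), (B L + ∑ j ∈ range k, B j) := by
  have hA : ∑ k ∈ range L, f k * (k + 1) = ∑ k ∈ range L, (A k * (k + 1) + B k * (k + 1)) :=
    sum_congr rfl fun k hk => by rw [hco k (mem_range.1 hk)]; ring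
  have hB : ∑ k ∈ range L, B k * (k + 1) + ∑ k ∈ range L, B k * (L - k) =
      (L + 1) * ∑ k ∈ range L, B k := by
    rw [← sum_add_distrib, mul_sum]; exact sum_congr rfl fun k _ => by ring
  have hB' : ∑ k ∈ range L, ((L : ℤ) - k) * B k = ∑ k ∈ range L, B k * (L - k) :=
    sum_congr rfl fun k _ => mul_comm _ _
  rw [baseDegree, sum_add_distrib, sum_const, card_range, sum_range_sum_range_eq_sum_sub_mul,
    sum_range_succ (fun j => ((L : ℤ) - j) * B j), hlast, sum_range_succ B, hA, sum_add_distrib,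
    hB', nsmul_eq_mul]
  push_cast
  linear_combination -hB

variable {m : ℤ}

lemma max_zero_sub_sum_Ico_le {β : ℕ → ℤ} (hβ : ∀ j ≤ L, 0 ≤ β j) (hβf : ∀ j < L, β j ≤ f j)
    (hm : m ≤ ∑ j ∈ range (L + 1), β j) {k : ℕ} (hk : k ≤ L) :
    max 0 (m - ∑ j ∈ Ico k L, f j) ≤ β L + ∑ j ∈ range k, β j := by
  have hsplit : ∑ j ∈ range (L + 1), β j = ∑ j ∈ range k, β j + ∑ j ∈ Ico k L, β j + β L := by
    rw [sum_range_succ, sum_range_add_sum_Ico _ hk]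
  have htail : ∑ j ∈ Ico k L, β j ≤ ∑ j ∈ Ico k L, f j :=
    sum_le_sum fun j hj => hβf j (mem_Ico.1 hj).2
  have hhead : 0 ≤ ∑ j ∈ range k, β j :=
    sum_nonneg fun j hj => hβ j (by rw [mem_range] at hj; omega)
  have := hβ L le_rfl
  exact max_le (by linarith) (by linarith)

lemma exists_eq_max_zero_sub_sum_Ico (hf : ∀ j < L, 0 ≤ f j) :
    ∃ β : ℕ → ℤ, (∀ j ≤ L, 0 ≤ β j) ∧ (∀ j < L, β j ≤ f j) ∧
      ∀ k ≤ L, β L + ∑ j ∈ range k, β j = max 0 (m - ∑ j ∈ Ico k L, f j) := by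
  set g : ℕ → ℤ := fun k => min m (∑ j ∈ Ico k L, f j)
  have hstep : ∀ j < L, g (j + 1) ≤ g j ∧ g j ≤ g (j + 1) + f j := fun j hj => by
    simp only [g, sum_eq_sum_Ico_succ_bot hj]
    have := hf j hj
    omega
  refine ⟨fun j => if j < L then g j - g (j + 1) else m - g 0, fun j _ => ?_, fun j hj => ?_,
    fun k hk => ?_⟩
  · dsimp only
    split_ifs with hj
    · linarith [hstep j hj]
    · linarith [min_le_left m (∑ j ∈ Ico 0 L, f j)]
  · simp only [if_pos hj]
    linarith [hstep j hj]
  · have htel : ∑ j ∈ range k, (if j < L then g j - g (j + 1) else m - g 0) = g 0 - g k := by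
      rw [← sum_range_sub' g]
      exact sum_congr rfl fun j hj => if_pos (by rw [mem_range] at hj; omega)
    simp only [lt_irrefl, if_false, htel, g]
    omega

end Sequences

section Coordinates

variable {n : ℕ} (hn : 1 ≤ n)

lemma betaWt_apply_of_lt {x : Fin n} (hx : (x : ℕ) < n - 1) (j : Fin n) :
    betaWt n hn j x = if j = x then 1 else 0 := by
  have : x ≠ ⟨n - 1, by omega⟩ := by intro h; simp [h] at hx
  unfold betaWt
  split_ifs with h1 h2 h2 <;> simp_all [Pi.single_apply, eq_comm]

lemma betaWt_apply_last (j : Fin n) : betaWt n hn j ⟨n - 1, by omega⟩ = -1 := by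
  have : ∀ j : Fin n, (j : ℕ) < n - 1 → j ≠ ⟨n - 1, by omega⟩ := by
    intro j hj h; simp [h] at hj
  unfold betaWt
  split_ifs with h1 <;> simp_all

variable (a b : Fin n → ℕ)

lemma repWt_apply_of_lt {x : Fin n} (hx : (x : ℕ) < n - 1) :
    repWt n hn a b x = a x + b x := by
  simp [repWt, Finset.sum_apply, alphaWt, Pi.single_apply, betaWt_apply_of_lt hn hx]

lemma repWt_apply_last :
    repWt n hn a b ⟨n - 1, by omega⟩ = a ⟨n - 1, by omega⟩ - ∑ j, (b j : ℤ) := by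
  simp [repWt, Finset.sum_apply, alphaWt, Pi.single_apply, betaWt_apply_last hn, sub_eq_add_neg]

lemma repWt_smul (c : ℕ) : repWt n hn (c • a) (c • b) = (c : ℤ) • repWt n hn a b := by
  simp only [repWt, smul_add, smul_sum, Pi.smul_apply, smul_eq_mul, Nat.cast_mul, mul_smul]

end Coordinates

section MinimalDegree

-- Vectors on `Fin (L + 1)` are read as sequences `k ↦ χ k`; only the indices `k ≤ L` are used,
-- so the wrap-around of the cast `ℕ → Fin (L + 1)` never matters.
open Fin.NatCast

variable {L : ℕ}

lemma sum_univ_eq_sum_range_natCast {M : Type*} [AddCommMonoid M] (g : Fin (L + 1) → ℕ → M) :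
    ∑ i : Fin (L + 1), g i i = ∑ k ∈ range (L + 1), g k k := by
  rw [← Fin.sum_univ_eq_sum_range (fun k => g k k)]
  simp

lemma degWt_eq_sum_range (a b : Fin (L + 1) → ℕ) :
    (degWt (L + 1) a b : ℤ) = ∑ k ∈ range L, (a k : ℤ) * (k + 1) + a L * (L + 1) +
      ∑ k ∈ range L, (b k : ℤ) * (L - k) + b L * (L + 1) := by
  rw [degWt]
  push_cast
  rw [sum_univ_eq_sum_range_natCast (fun i k => (a i : ℤ) * (k + 1)),
    sum_univ_eq_sum_range_natCast
      (fun i k => (b i : ℤ) * if k < L then ((L - k : ℕ) : ℤ) else (L : ℤ) + 1),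
    sum_range_succ, sum_range_succ, if_neg (lt_irrefl L)]
  have hb : ∑ k ∈ range L, (b k : ℤ) * (if k < L then ((L - k : ℕ) : ℤ) else (L : ℤ) + 1) =
      ∑ k ∈ range L, (b k : ℤ) * (L - k) := sum_congr rfl fun k hk => by
    rw [if_pos (mem_range.1 hk), Nat.cast_sub (mem_range.1 hk).le]
  rw [hb]
  ring

variable (hn : 1 ≤ L + 1) {χ : Fin (L + 1) → ℤ}

lemma eq_repWt_iff {a b : Fin (L + 1) → ℕ} :
    χ = repWt (L + 1) hn a b ↔
      (∀ k < L, χ k = a k + b k) ∧ χ L = a L - ∑ k ∈ range (L + 1), (b k : ℤ) := by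
  have hlast : (⟨L + 1 - 1, by omega⟩ : Fin (L + 1)) = L := by ext; simp
  have hsum := sum_univ_eq_sum_range_natCast (fun i (_ : ℕ) => (b i : ℤ))
  constructor
  · rintro rfl
    refine ⟨fun k hk => repWt_apply_of_lt hn a b ?_, ?_⟩
    · rw [Fin.val_cast_of_lt (by omega)]; omega
    · rw [← hsum, ← hlast, repWt_apply_last]
  · rintro ⟨hco, hL⟩
    funext x
    rw [← Fin.cast_val_eq_self x]
    rcases lt_or_eq_of_le (Nat.lt_succ_iff.1 x.is_lt) with hx | hx
    · rw [hco x hx, repWt_apply_of_lt hn a b (by simpa using hx)]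
    · rw [hx, hL, ← hsum, ← hlast, repWt_apply_last]


lemma degWt_eq_baseDegree_add {a b : Fin (L + 1) → ℕ} (h : χ = repWt (L + 1) hn a b) :
    (degWt (L + 1) a b : ℤ) = baseDegree L (fun k => χ k) +
      2 * ∑ k ∈ range (L + 1), ((b L : ℤ) + ∑ j ∈ range k, (b j : ℤ)) := by
  obtain ⟨hco, hL⟩ := (eq_repWt_iff hn).1 h
  rw [degWt_eq_sum_range]
  exact degree_eq_baseDegree_add (A := fun k => (a k : ℤ)) (B := fun k => (b k : ℤ)) hco hL

lemma minDegree_le_degWt {a b : Fin (L + 1) → ℕ} (h : χ = repWt (L + 1) hn a b) :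
    minDegree L (fun k => χ k) ≤ degWt (L + 1) a b := by
  obtain ⟨hco, hL⟩ := (eq_repWt_iff hn).1 h
  have hm : max 0 (-χ L) ≤ ∑ k ∈ range (L + 1), (b k : ℤ) :=
    max_le (sum_nonneg fun _ _ => Int.natCast_nonneg _) (by linarith [Int.natCast_nonneg (a L)])
  rw [minDegree, degWt_eq_baseDegree_add hn h]
  gcongr with k hk
  refine max_zero_sub_sum_Ico_le (fun _ _ => Int.natCast_nonneg _) (fun j hj => ?_) hm
    (Nat.lt_succ_iff.1 (mem_range.1 hk))
  linarith [hco j hj, Int.natCast_nonneg (a j)]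

lemma exists_eq_repWt_of_le {β : ℕ → ℤ} (hβ : ∀ k ≤ L, 0 ≤ β k) (hβχ : ∀ k < L, β k ≤ χ k)
    (hsum : -χ L ≤ ∑ k ∈ range (L + 1), β k) :
    ∃ a b, χ = repWt (L + 1) hn a b ∧ ∀ k ≤ L, (b k : ℤ) = β k := by
  set b : Fin (L + 1) → ℕ := fun i => (β i).toNat
  set a : Fin (L + 1) → ℕ := fun i =>
    if (i : ℕ) < L then (χ i - β i).toNat else (χ i + ∑ k ∈ range (L + 1), β k).toNat
  have hval : ∀ k ≤ L, ((k : Fin (L + 1)) : ℕ) = k := fun k hk => Fin.val_cast_of_lt (by omega)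
  have hb : ∀ k ≤ L, (b k : ℤ) = β k := fun k hk => by
    simp only [b, hval k hk, Int.toNat_of_nonneg (hβ k hk)]
  have hbsum : ∑ k ∈ range (L + 1), (b k : ℤ) = ∑ k ∈ range (L + 1), β k :=
    sum_congr rfl fun k hk => hb k (Nat.lt_succ_iff.1 (mem_range.1 hk))
  refine ⟨a, b, (eq_repWt_iff hn).2 ⟨fun k hk => ?_, ?_⟩, hb⟩
  · simp only [a, hval k hk.le, if_pos hk, hb k hk.le]
    rw [Int.toNat_of_nonneg (by linarith [hβχ k hk])]
    ring
  · simp only [a, hval L le_rfl, lt_irrefl, if_false, hbsum]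
    rw [Int.toNat_of_nonneg (by linarith)]
    ring

lemma exists_degWt_eq_minDegree (hχ : ∀ k < L, 0 ≤ χ k) :
    ∃ a b, χ = repWt (L + 1) hn a b ∧ (degWt (L + 1) a b : ℤ) = minDegree L (fun k => χ k) := by
  obtain ⟨β, hβ, hβχ, hβsum⟩ := exists_eq_max_zero_sub_sum_Ico (m := max 0 (-χ L)) hχ
  have htotal : ∑ k ∈ range (L + 1), β k = max 0 (-χ L) := by
    rw [sum_range_succ, add_comm, hβsum L le_rfl, Ico_self, sum_empty, sub_zero,
      max_eq_right (le_max_left _ _)]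
  obtain ⟨a, b, hrep, hb⟩ :=
    exists_eq_repWt_of_le hn hβ hβχ (htotal ▸ le_max_right 0 (-χ L))
  refine ⟨a, b, hrep, ?_⟩
  rw [degWt_eq_baseDegree_add hn hrep, minDegree]
  congr 2
  refine sum_congr rfl fun k hk => ?_
  have hk := Nat.lt_succ_iff.1 (mem_range.1 hk)
  rw [hb L le_rfl, ← hβsum k hk]
  congr 1
  exact sum_congr rfl fun j hj => hb j (by rw [mem_range] at hj; omega)

lemma sInf_degWt_eq (hχ : ∃ a b, χ = repWt (L + 1) hn a b) :
    ((sInf {d : ℕ | ∃ a b, χ = repWt (L + 1) hn a b ∧ d = degWt (L + 1) a b} : ℕ) : ℤ) =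
      minDegree L (fun k => χ k) := by
  have hnonneg : ∀ k < L, 0 ≤ χ k := by
    obtain ⟨a, b, h⟩ := hχ
    intro k hk
    rw [((eq_repWt_iff hn).1 h).1 k hk]
    positivity
  obtain ⟨a, b, hrep, hdeg⟩ := exists_degWt_eq_minDegree hn hnonneg
  have hleast : IsLeast {d : ℕ | ∃ a b, χ = repWt (L + 1) hn a b ∧ d = degWt (L + 1) a b}
      (degWt (L + 1) a b) := by
    refine ⟨⟨a, b, hrep, rfl⟩, ?_⟩
    rintro _ ⟨a', b', h', rfl⟩
    exact_mod_cast hdeg ▸ minDegree_le_degWt hn h'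
  rw [hleast.csInf_eq, hdeg]

end MinimalDegree

theorem stmt10_general (n : ℕ) (hn : 1 ≤ n) (χ : Fin n → ℤ)
    (hχ : ∃ a b : Fin n → ℕ, χ = repWt n hn a b) (c : ℕ) :
    sInf {d : ℕ | ∃ a b : Fin n → ℕ, (c : ℤ) • χ = repWt n hn a b ∧ d = degWt n a b} =
      c * sInf {d : ℕ | ∃ a b : Fin n → ℕ, χ = repWt n hn a b ∧ d = degWt n a b} := by
  obtain ⟨L, rfl⟩ : ∃ L, n = L + 1 := ⟨n - 1, by omega⟩
  have hcχ : ∃ a b : Fin (L + 1) → ℕ, (c : ℤ) • χ = repWt (L + 1) hn a b := by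
    obtain ⟨a, b, rfl⟩ := hχ
    exact ⟨c • a, c • b, (repWt_smul hn a b c).symm⟩
  apply Nat.cast_injective (R := ℤ)
  rw [Nat.cast_mul, sInf_degWt_eq hn hcχ, sInf_degWt_eq hn hχ,
    ← minDegree_mul (Int.natCast_nonneg c)]
  rfl

/-- the minimal total degree `n(χ)` of a presentation of `χ` as a
nonnegative integer combination of the `α_i` and `β_j` satisfies `n(cχ) = c·n(χ)`. -/
theorem stmt10 (n : ℕ) (hn : 1 ≤ n) (χ : Fin n → ℤ)
    (hχ : ∃ a b : Fin n → ℕ, χ = repWt n hn a b) (c : ℕ) (hc : 0 < c) :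
    sInf {d : ℕ | ∃ a b : Fin n → ℕ, (c : ℤ) • χ = repWt n hn a b ∧ d = degWt n a b} =
      c * sInf {d : ℕ | ∃ a b : Fin n → ℕ, χ = repWt n hn a b ∧ d = degWt n a b} :=
  stmt10_general n hn χ hχ c
end

section
/- Let k be a field of characteristic zero and n = 2r with r ≥ 1. Let Q be the bilinear form on k^n with matrix having ±1 on the antidiagonal and zeros elsewhere, making k^n a symplectic space, and let U = Sp(Q) ∩ (upper unitriangular matrices), a maximal unipotent subgroup of Sp_n. Then for any l ≥ 1 and any k with r < k ≤ min(l, n), every lower minor determinant of order k of the n × l coordinate matrix B of a tuple (v₁,…,v_l) ∈ (k^n)^l is a polynomial in the functions Q(v_i, v_j) (i < j) and the lower minor determinants of orders ≤ r. -/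
/-- The symplectic form on `k^{2r}` with matrix having `±1` on the antidiagonal. -/
def sympForm (k : Type*) [Field k] (r : ℕ) (x y : Fin (2 * r) → k) : k :=
  ∑ a : Fin (2 * r), ∑ b : Fin (2 * r),
    x a * (if (a : ℕ) + (b : ℕ) = 2 * r - 1 then
      (if (a : ℕ) < (b : ℕ) then (1 : k) else -1) else 0) * y b

/-- The lower minor of order `d` of the `2r × l` matrix whose columns are
`v₁,…,v_l`, on the columns selected by `cs`. -/
def lowerMinor (k : Type*) [Field k] (r l d : ℕ) (hd : d ≤ 2 * r)
    (cs : Fin d → Fin l) (v : Fin l → Fin (2 * r) → k) : k :=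
  Matrix.det (Matrix.of fun x y : Fin d =>
    v (cs y) ⟨2 * r - d + (x : ℕ), by have := x.isLt; omega⟩)

/-!
Write `p = 2s + m` and `r = m + s`. The lower `p × p` minor uses the rows `m, …, 2r - 1`: the `s`
antidiagonal pairs `{a, a.rev}` with `m ≤ a < m + s`, and the top `m` rows, whose partners lie
outside the minor. Alternate, over the permutations of the `p` columns, the product of `s`
pairings `Q(w, w')` with the lower `m`-minor of the remaining `m` columns. Expanding each pairing
along the antidiagonal and the `m`-minor by Leibniz turns this alternation into a signed sum of
`p × p` determinants with prescribed rows. Those with a repeated row vanish; this forces every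
pairing onto a middle pair, because a pair through one of the rows `0, …, m - 1` also contains a
top row. The `s! 2^s m!` surviving terms (signed permutations of the middle pairs, permutations of
the top rows) all equal the lower `p`-minor, and in characteristic zero we may divide.
-/

namespace SymplecticMinor

open Equiv Equiv.Perm Matrix

variable {k : Type*} [Field k]

lemma det_eq_zero_of_not_injective {ι n : Type*} [Fintype ι] [DecidableEq ι] (w : ι → n → k)
    {h : ι → n} (hh : ¬Function.Injective h) : (of fun u z => w u (h z)).det = 0 := by
  obtain ⟨z, z', heq, hne⟩ : ∃ z z', h z = h z' ∧ z ≠ z' := by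
    simpa [Function.Injective] using hh
  exact det_zero_of_column_eq hne fun u => by simp [heq]

def pairSign (k : Type*) [Field k] {n : ℕ} (a : Fin n) : k :=
  if (a : ℕ) < a.rev then 1 else -1

lemma rev_ne_self {r : ℕ} (a : Fin (2 * r)) : a.rev ≠ a := by
  rw [ne_eq, Fin.ext_iff, Fin.val_rev]; omega

lemma pairSign_rev {r : ℕ} (a : Fin (2 * r)) : pairSign k a.rev = -pairSign k a := by
  have := Fin.val_rev a
  simp only [pairSign, Fin.rev_rev]
  split_ifs <;> first | omega | simp

lemma sympForm_eq_sum (r : ℕ) (x y : Fin (2 * r) → k) :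
    sympForm k r x y = ∑ a, x a * pairSign k a * y a.rev := by
  refine Finset.sum_congr rfl fun a _ => ?_
  rw [Finset.sum_eq_single a.rev]
  · rw [Fin.val_rev, if_pos (by omega)]; rfl
  · intro b _ hb
    rw [if_neg, mul_zero, zero_mul]
    exact fun h => hb (Fin.ext (by rw [Fin.val_rev]; omega))
  · simp

lemma sympForm_antisymm (r : ℕ) (x y : Fin (2 * r) → k) :
    sympForm k r y x = -sympForm k r x y := by
  rw [sympForm_eq_sum, sympForm_eq_sum, ← Fintype.sum_equiv Fin.revPerm _ _ fun _ => rfl,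
    ← Finset.sum_neg_distrib]
  refine Finset.sum_congr rfl fun a _ => ?_
  simp only [Fin.revPerm_apply, Fin.rev_rev, pairSign_rev]
  ring

lemma sympForm_self (r : ℕ) (x : Fin (2 * r) → k) : sympForm k r x x = 0 := by
  rw [sympForm_eq_sum]
  refine Finset.sum_involution (fun a _ => a.rev) (fun a _ => ?_) (fun a _ _ => rev_ne_self a)
    (fun _ _ => Finset.mem_univ _) (fun a _ => Fin.rev_rev a)
  rw [Fin.rev_rev, pairSign_rev]
  ring

variable {s m : ℕ}

/-- Indexes both the columns of the lower `(2s + m)`-minor and its rows (through `slotRow`). -/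
abbrev Slot (s m : ℕ) : Type := (Fin s × Fin 2) ⊕ Fin m

def topRow (s : ℕ) (j : Fin m) : Fin (2 * (m + s)) := ⟨2 * (m + s) - m + j, by omega⟩

/-- The rows picked by one term of the expansion of `alternatedProduct`: `f i` is the summation
index of the `i`-th pairing, `τ` the permutation in the Leibniz expansion of the `m`-minor. -/
def rowMap (f : Fin s → Fin (2 * (m + s))) (τ : Perm (Fin m)) : Slot s m → Fin (2 * (m + s))
  | .inl (i, t) => if t = 0 then f i else (f i).rev
  | .inr j => topRow s (τ j)

lemma rowMap_inl_zero (f : Fin s → Fin (2 * (m + s))) (τ : Perm (Fin m)) (i : Fin s) :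
    rowMap f τ (.inl (i, 0)) = f i := rfl

lemma rowMap_inl_one (f : Fin s → Fin (2 * (m + s))) (τ : Perm (Fin m)) (i : Fin s) :
    rowMap f τ (.inl (i, 1)) = (f i).rev := rfl

/-- `(i, 0)` and `(i, 1)` are the antidiagonal pair of rows `m + i` and `(m + i).rev`, and `.inr j`
are the top rows, whose partners lie outside the lower minor. -/
def slotRow : Slot s m → Fin (2 * (m + s)) :=
  rowMap (fun i => ⟨m + i, by omega⟩) 1

lemma slotRow_inl_add_one (i : Fin s) (t : Fin 2) :
    slotRow (m := m) (.inl (i, t + 1)) = (slotRow (.inl (i, t))).rev := by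
  fin_cases t <;> simp [slotRow, rowMap]

lemma slotRow_injective : Function.Injective (slotRow (s := s) (m := m)) := by
  rintro (⟨i, t⟩ | j) (⟨i', t'⟩ | j') h <;> (try fin_cases t) <;> (try fin_cases t') <;>
    simp [slotRow, rowMap, topRow, Fin.ext_iff, Fin.val_rev] at h ⊢ <;> omega

lemma m_le_slotRow (z : Slot s m) : m ≤ slotRow z := by
  rcases z with ⟨i, t⟩ | j <;> (try fin_cases t) <;>
    simp [slotRow, rowMap, topRow, Fin.val_rev] <;> omega

noncomputable def slotEquiv (s m : ℕ) : Slot s m ≃ Fin (2 * s + m) :=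
  Equiv.ofBijective (fun z => ⟨slotRow z - m, by omega⟩)
    ((Fintype.bijective_iff_injective_and_card _).2
      ⟨fun z z' h => slotRow_injective (Fin.ext (by
        have := m_le_slotRow z; have := m_le_slotRow z'; simp only [Fin.ext_iff] at h; omega)),
       by simp only [Fintype.card_sum, Fintype.card_prod, Fintype.card_fin]; ring⟩)

lemma prod_rowMap {M : Type*} [CommMonoid M] (g : Slot s m → Fin (2 * (m + s)) → M)
    (f : Fin s → Fin (2 * (m + s))) (τ : Perm (Fin m)) :
    ∏ z, g z (rowMap f τ z) =
      (∏ i, g (.inl (i, 0)) (f i) * g (.inl (i, 1)) (f i).rev) *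
        ∏ j, g (.inr j) (topRow s (τ j)) := by
  simp [Fintype.prod_sum_type, Fintype.prod_prod_type, Fin.prod_univ_two, rowMap]

lemma prod_sympForm_mul_det (g : Slot s m → Fin (2 * (m + s)) → k) :
    (∏ i, sympForm k (m + s) (g (.inl (i, 0))) (g (.inl (i, 1)))) *
        (of fun x y : Fin m => g (.inr y) (topRow s x)).det =
      ∑ f : Fin s → Fin (2 * (m + s)), ∑ τ : Perm (Fin m),
        ((∏ i, pairSign k (f i)) * ((sign τ : ℤ) : k)) * ∏ z, g z (rowMap f τ z) := by
  simp_rw [sympForm_eq_sum, Finset.prod_univ_sum, det_apply', Finset.sum_mul_sum, prod_rowMap,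
    Finset.prod_mul_distrib]
  refine Fintype.sum_congr _ _ fun f => Fintype.sum_congr _ _ fun τ => ?_
  simp only [of_apply]
  ring

def alternatedProduct (w : Slot s m → Fin (2 * (m + s)) → k) : k :=
  ∑ σ : Perm (Slot s m), ((sign σ : ℤ) : k) *
    ((∏ i, sympForm k (m + s) (w (σ (.inl (i, 0)))) (w (σ (.inl (i, 1))))) *
      (of fun x y : Fin m => w (σ (.inr y)) (topRow s x)).det)

lemma alternatedProduct_eq_sum_det (w : Slot s m → Fin (2 * (m + s)) → k) :
    alternatedProduct w =
      ∑ f : Fin s → Fin (2 * (m + s)), ∑ τ : Perm (Fin m),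
        ((∏ i, pairSign k (f i)) * ((sign τ : ℤ) : k)) *
          (of fun u z => w u (rowMap f τ z)).det := by
  have expand (σ : Perm (Slot s m)) := prod_sympForm_mul_det (k := k) fun z => w (σ z)
  simp only [alternatedProduct, expand]
  simp only [det_apply', of_apply, Finset.mul_sum]
  rw [Finset.sum_comm]
  refine Fintype.sum_congr _ _ fun f => ?_
  rw [Finset.sum_comm]
  refine Fintype.sum_congr _ _ fun τ => Fintype.sum_congr _ _ fun σ => ?_
  ring

def signedPerm (β : Perm (Fin s)) (e : Fin s → Fin 2) : Perm (Fin s × Fin 2) :=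
  prodCongrLeft (fun _ => β) * prodCongrRight fun i => Equiv.addRight (e i)

lemma signedPerm_apply (β : Perm (Fin s)) (e : Fin s → Fin 2) (i : Fin s) (t : Fin 2) :
    signedPerm β e (i, t) = (β i, t + e i) := rfl

lemma sign_signedPerm (β : Perm (Fin s)) (e : Fin s → Fin 2) :
    sign (signedPerm β e) = ∏ i, sign (Equiv.addRight (e i)) := by
  rw [signedPerm, map_mul, sign_prodCongrLeft, sign_prodCongrRight, Fin.prod_univ_two,
    Int.units_mul_self, one_mul]

def signedRows (β : Perm (Fin s)) (e : Fin s → Fin 2) : Fin s → Fin (2 * (m + s)) :=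
  fun i => slotRow (.inl (β i, e i))

lemma pairSign_slotRow (i : Fin s) (t : Fin 2) :
    pairSign k (slotRow (m := m) (.inl (i, t))) = ((sign (Equiv.addRight t) : ℤ) : k) := by
  have hswap : Equiv.addRight (1 : Fin 2) = swap 0 1 := by ext t; fin_cases t <;> rfl
  fin_cases t <;> simp [pairSign, slotRow, rowMap, Fin.val_rev, hswap] <;> omega

lemma signedRows_injective :
    Function.Injective fun βe : Perm (Fin s) × (Fin s → Fin 2) =>
      signedRows (m := m) βe.1 βe.2 := by
  rintro ⟨β, e⟩ ⟨β', e'⟩ h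
  have hi (i : Fin s) : (β i, e i) = (β' i, e' i) :=
    Sum.inl_injective (slotRow_injective (congrFun h i))
  exact Prod.ext (Equiv.ext fun i => (Prod.ext_iff.1 (hi i)).1)
    (funext fun i => (Prod.ext_iff.1 (hi i)).2)

lemma rowMap_signedRows (β : Perm (Fin s)) (e : Fin s → Fin 2) (τ : Perm (Fin m)) :
    rowMap (signedRows β e) τ = slotRow ∘ Perm.sumCongr (signedPerm β e) τ := by
  funext z
  rcases z with ⟨i, t⟩ | j
  · fin_cases t
    · simp [rowMap, signedRows, signedPerm_apply]
    · simp [rowMap, signedRows, signedPerm_apply, add_comm (1 : Fin 2), slotRow_inl_add_one]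
  · rfl

lemma coeff_mul_det_signedRows (w : Slot s m → Fin (2 * (m + s)) → k) (β : Perm (Fin s))
    (e : Fin s → Fin 2) (τ : Perm (Fin m)) :
    ((∏ i, pairSign k (signedRows (m := m) β e i)) * ((sign τ : ℤ) : k)) *
        (of fun u z => w u (rowMap (signedRows β e) τ z)).det =
      (of fun u z => w u (slotRow z)).det := by
  have hsub : (of fun u z => w u (rowMap (signedRows β e) τ z)) =
      (of fun u z => w u (slotRow z)).submatrix id (Perm.sumCongr (signedPerm β e) τ) := by
    rw [rowMap_signedRows]; rfl
  have hcoeff :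
      ∏ i, pairSign k (signedRows (m := m) β e i) = ((sign (signedPerm β e) : ℤ) : k) := by
    simp [signedRows, pairSign_slotRow, sign_signedPerm]
  have hsq (u : ℤˣ) : ((u : ℤ) : k) * ((u : ℤ) : k) = 1 := by
    rw [← Int.cast_mul, ← Units.val_mul, Int.units_mul_self]; simp
  rw [hcoeff, hsub, det_permute', sign_sumCongr]
  push_cast
  linear_combination ((((sign τ : ℤ) : k)) ^ 2 * (of fun u z => w u (slotRow z)).det) *
    hsq (sign (signedPerm β e)) + (of fun u z => w u (slotRow z)).det * hsq (sign τ)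

lemma rowMap_inl_lt_of_injective {f : Fin s → Fin (2 * (m + s))} {τ : Perm (Fin m)}
    (hf : Function.Injective (rowMap f τ)) (q : Fin s × Fin 2) :
    (rowMap f τ (.inl q) : ℕ) < 2 * (m + s) - m := by
  by_contra! h
  have hlt := (rowMap f τ (.inl q)).isLt
  exact Sum.inl_ne_inr <| @hf (.inl q)
    (.inr (τ.symm ⟨rowMap f τ (.inl q) - (2 * (m + s) - m), by omega⟩))
    (Fin.ext (by rw [rowMap, apply_symm_apply, topRow]; dsimp only; omega))

lemma exists_slotRow_eq_of_injective {f : Fin s → Fin (2 * (m + s))} {τ : Perm (Fin m)}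
    (hf : Function.Injective (rowMap f τ)) (i : Fin s) : ∃ q, slotRow (.inl q) = f i := by
  have h0 := rowMap_inl_lt_of_injective hf (i, 0)
  have h1 := rowMap_inl_lt_of_injective hf (i, 1)
  simp only [rowMap, if_pos, Fin.val_rev, Fin.isValue, one_ne_zero, if_false] at h0 h1
  by_cases hmid : (f i : ℕ) < m + s
  · exact ⟨(⟨f i - m, by omega⟩, 0),
      Fin.ext (by simp only [slotRow, rowMap, Fin.isValue, ↓reduceIte]; omega)⟩
  · exact ⟨(⟨2 * (m + s) - 1 - f i - m, by omega⟩, 1),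
      Fin.ext (by
        simp only [slotRow, rowMap, Fin.isValue, one_ne_zero, ↓reduceIte, Fin.val_rev]; omega)⟩

lemma exists_signedRows_eq_of_injective {f : Fin s → Fin (2 * (m + s))} {τ : Perm (Fin m)}
    (hf : Function.Injective (rowMap f τ)) :
    ∃ βe : Perm (Fin s) × (Fin s → Fin 2), signedRows βe.1 βe.2 = f := by
  choose q hq using exists_slotRow_eq_of_injective hf
  have hinj : Function.Injective fun i => (q i).1 := by
    intro i j hij
    obtain ⟨t, ht⟩ : ∃ t : Fin 2, rowMap f τ (.inl (i, t)) = rowMap f τ (.inl (j, 0)) := by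
      rw [rowMap_inl_zero, ← hq j]
      rcases (by omega : (q j).2 = (q i).2 ∨ (q j).2 = (q i).2 + 1) with h | h
      · exact ⟨0, by rw [rowMap_inl_zero, ← hq i, Prod.ext hij.symm h]⟩
      · refine ⟨1, ?_⟩
        rw [rowMap_inl_one, ← hq i, show q j = ((q i).1, (q i).2 + 1) from Prod.ext hij.symm h,
          slotRow_inl_add_one]
    exact (Prod.ext_iff.1 (Sum.inl_injective (hf ht))).1
  exact ⟨(Equiv.ofBijective _ (Finite.injective_iff_bijective.1 hinj), fun i => (q i).2),
    funext fun i => hq i⟩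

theorem alternatedProduct_eq (w : Slot s m → Fin (2 * (m + s)) → k) :
    alternatedProduct w =
      ((s.factorial * 2 ^ s * m.factorial : ℕ) : k) * (of fun u z => w u (slotRow z)).det := by
  rw [alternatedProduct_eq_sum_det, ← Fintype.sum_of_injective _ signedRows_injective _ _
    (fun f hf => Finset.sum_eq_zero fun τ _ => ?_) fun _ => rfl]
  · simp_rw [coeff_mul_det_signedRows, Finset.sum_const, Finset.card_univ, Fintype.card_prod,
      Fintype.card_perm, Fintype.card_fun, Fintype.card_fin, smul_smul, nsmul_eq_mul]
  · rw [det_eq_zero_of_not_injective _ fun hinj => hf (exists_signedRows_eq_of_injective hinj),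
      mul_zero]

lemma alternatedProduct_comp_slotEquiv {l : ℕ} (hp : 2 * s + m ≤ 2 * (m + s))
    (cols : Fin (2 * s + m) → Fin l) (v : Fin l → Fin (2 * (m + s)) → k) :
    alternatedProduct (fun z => v (cols (slotEquiv s m z))) =
      ((s.factorial * 2 ^ s * m.factorial : ℕ) : k) *
        lowerMinor k (m + s) l (2 * s + m) hp cols v := by
  rw [alternatedProduct_eq, lowerMinor, ← det_transpose,
    ← det_submatrix_equiv_self (slotEquiv s m)]
  congr 2
  ext z u
  have := m_le_slotRow z
  simp only [transpose_apply, submatrix_apply, of_apply, slotEquiv, Equiv.ofBijective_apply]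
  congr 1
  ext
  simp only
  omega

def pairingsAndLowMinors (k : Type*) [Field k] (r l : ℕ) (v : Fin l → Fin (2 * r) → k) :
    {q : Fin l × Fin l // q.1 < q.2} ⊕ ((d : Fin r) × (Fin ((d : ℕ) + 1) → Fin l)) → k :=
  Sum.elim (fun q => sympForm k r (v q.1.1) (v q.1.2))
    (fun dc => lowerMinor k r l ((dc.1 : ℕ) + 1) (by have := dc.1.isLt; omega) dc.2 v)

def pairingMinorAlgebra (k : Type*) [Field k] (r l : ℕ) :
    Subalgebra k ((Fin l → Fin (2 * r) → k) → k) :=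
  Algebra.adjoin k (Set.range fun g v => pairingsAndLowMinors k r l v g)

variable {r l : ℕ}

lemma exists_eval_eq_of_mem {F : (Fin l → Fin (2 * r) → k) → k}
    (hF : F ∈ pairingMinorAlgebra k r l) :
    ∃ P, ∀ v, F v = MvPolynomial.eval (pairingsAndLowMinors k r l v) P := by
  rw [pairingMinorAlgebra, Algebra.adjoin_range_eq_range_aeval] at hF
  obtain ⟨P, rfl⟩ := hF
  exact ⟨P, fun v => MvPolynomial.comp_aeval_apply _ (Pi.evalAlgHom k (fun _ => k) v) P⟩

lemma sympForm_mem (a b : Fin l) :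
    (fun v => sympForm k r (v a) (v b)) ∈ pairingMinorAlgebra k r l := by
  rcases lt_trichotomy a b with h | rfl | h
  · exact Algebra.subset_adjoin ⟨.inl ⟨(a, b), h⟩, rfl⟩
  · simp only [sympForm_self]
    exact zero_mem _
  · have hba : (fun v => sympForm k r (v b) (v a)) ∈ pairingMinorAlgebra k r l :=
      Algebra.subset_adjoin ⟨.inl ⟨(b, a), h⟩, rfl⟩
    convert neg_mem hba using 1
    funext v
    exact sympForm_antisymm r (v b) (v a)

lemma lowerMinor_mem_of_le {d : ℕ} (hd : d ≤ r) (cs : Fin d → Fin l) :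
    (fun v => lowerMinor k r l d (by omega) cs v) ∈ pairingMinorAlgebra k r l := by
  cases d with
  | zero =>
    simp only [lowerMinor, det_isEmpty]
    exact one_mem _
  | succ d => exact Algebra.subset_adjoin ⟨.inr ⟨⟨d, by omega⟩, cs⟩, rfl⟩

lemma alternatedProduct_mem (c : Slot s m → Fin l) :
    (fun v => alternatedProduct fun z => v (c z)) ∈ pairingMinorAlgebra k (m + s) l := by
  have hsum : (fun v => alternatedProduct fun z => v (c z)) =
      ∑ σ : Perm (Slot s m), ((sign σ : ℤ) : k) •
        ((∏ i, fun v =>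
            sympForm k (m + s) (v (c (σ (.inl (i, 0))))) (v (c (σ (.inl (i, 1)))))) *
          fun v => lowerMinor k (m + s) l m (by omega) (fun j => c (σ (.inr j))) v) := by
    funext v
    simp [alternatedProduct, Finset.sum_apply, Finset.prod_apply, lowerMinor, topRow]
  rw [hsum]
  exact Subalgebra.sum_mem _ fun σ _ => Subalgebra.smul_mem _ (Subalgebra.mul_mem _
    (Subalgebra.prod_mem _ fun i _ => sympForm_mem _ _) (lowerMinor_mem_of_le (by omega) _)) _

theorem lowerMinor_mem [CharZero k] {d : ℕ} (hd : d ≤ 2 * r) (cs : Fin d → Fin l) :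
    (fun v => lowerMinor k r l d hd cs v) ∈ pairingMinorAlgebra k r l := by
  rcases le_or_gt d r with hdr | hrd
  · exact lowerMinor_mem_of_le hdr cs
  obtain ⟨s, m, rfl, rfl⟩ : ∃ s m, d = 2 * s + m ∧ r = m + s :=
    ⟨d - r, 2 * r - d, by omega, by omega⟩
  have hc : ((s.factorial * 2 ^ s * m.factorial : ℕ) : k) ≠ 0 :=
    Nat.cast_ne_zero.2 (by positivity)
  convert Subalgebra.smul_mem _ (alternatedProduct_mem fun z => cs (slotEquiv s m z))
    ((s.factorial * 2 ^ s * m.factorial : ℕ) : k)⁻¹ using 1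
  funext v
  rw [Pi.smul_apply, alternatedProduct_comp_slotEquiv, smul_eq_mul, inv_mul_cancel_left₀ hc]

end SymplecticMinor

/-- for the symplectic group, every lower minor of order `p` with
`r < p ≤ min(l, 2r)` is a polynomial in the pairings `Q(vᵢ, vⱼ)` (`i < j`) and the
lower minors of order at most `r`. -/
theorem stmt13 (k : Type*) [Field k] [CharZero k] (r : ℕ)
    (l : ℕ) (p : ℕ) (hp3 : p ≤ 2 * r)
    (cols : Fin p → Fin l) :
    ∃ P : MvPolynomial
        ({q : Fin l × Fin l // q.1 < q.2} ⊕ ((d : Fin r) × (Fin ((d : ℕ) + 1) → Fin l))) k,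
      ∀ v : Fin l → Fin (2 * r) → k,
        lowerMinor k r l p hp3 cols v =
          MvPolynomial.eval
            (Sum.elim
              (fun q => sympForm k r (v q.1.1) (v q.1.2))
              (fun dc => lowerMinor k r l ((dc.1 : ℕ) + 1)
                (by have := dc.1.isLt; omega) dc.2 v))
            P :=
  SymplecticMinor.exists_eval_eq_of_mem (SymplecticMinor.lowerMinor_mem hp3 cols)
end
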